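/- For every finite graph G, μ(G) = ν(G) if and only if e(G) = e_p(G). -/

import Mathlib

variable {V : Type*}

/-- A matching of `G`, given as a set of edges: a set of edges of `G` that are
pairwise non-adjacent (no two distinct edges share a vertex). -/
def IsMatchingSet (G : SimpleGraph V) (M : Set (Sym2 V)) : Prop :=
  M ⊆ G.edgeSet ∧ ∀ e ∈ M, ∀ f ∈ M, e ≠ f → ∀ v : V, ¬(v ∈ e ∧ v ∈ f)

/-- ν(G): the maximum size of a matching of `G`. -/
noncomputable def matchingNumber (G : SimpleGraph V) : ℕ :=
  sSup {n | ∃ M : Set (Sym2 V), IsMatchingSet G M ∧ M.ncard = n}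

/-- λ(G): the maximum of |H| + |H'| over pairs (H, H') of disjoint matchings of `G`. -/
noncomputable def lambdaParam (G : SimpleGraph V) : ℕ :=
  sSup {n | ∃ H H' : Set (Sym2 V), IsMatchingSet G H ∧ IsMatchingSet G H' ∧
    Disjoint H H' ∧ H.ncard + H'.ncard = n}

/-- μ(G): the maximum of |H| over pairs (H, H') of disjoint matchings of `G` with
|H| + |H'| = λ(G). -/
noncomputable def muParam (G : SimpleGraph V) : ℕ :=
  sSup {n | ∃ H H' : Set (Sym2 V), IsMatchingSet G H ∧ IsMatchingSet G H' ∧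
    Disjoint H H' ∧ H.ncard + H'.ncard = lambdaParam G ∧ H.ncard = n}

/-- The degree of `v` in `G` (stated without decidability assumptions). -/
noncomputable def degree' (G : SimpleGraph V) (v : V) : ℕ := Nat.card (G.neighborSet v)

/-- The connected component `c` of `G` is a path: every vertex of `c` has degree at most 2
in `G`, and no cycle of `G` passes through a vertex of `c`. (An isolated vertex counts as a
path, namely an even path with zero edges.) -/
def IsPathComponent (G : SimpleGraph V) (c : G.ConnectedComponent) : Prop :=
  (∀ v, G.connectedComponentMk v = c → degree' G v ≤ 2) ∧
  (∀ v, G.connectedComponentMk v = c → ∀ w : G.Walk v v, ¬ w.IsCycle)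

/-- `G'` is a pec decomposition of `G`: a spanning subgraph of `G` each of whose connected
components is a path or a cycle with an even number of edges (equivalently, all degrees of
`G'` are at most 2 and every cycle of `G'` is even). -/
def IsPec (G G' : SimpleGraph V) : Prop :=
  G' ≤ G ∧ (∀ v, degree' G' v ≤ 2) ∧ ∀ (v : V) (w : G'.Walk v v), w.IsCycle → Even w.length

/-- p(G'): the number of connected components of `G'` that are paths. -/
noncomputable def pathCount (G' : SimpleGraph V) : ℕ :=
  Nat.card {c : G'.ConnectedComponent // IsPathComponent G' c}

/-- e(G'): the number of connected components of `G'` that are paths with an even number of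
edges, equivalently paths with an odd number of vertices. -/
noncomputable def evenPathCount (G' : SimpleGraph V) : ℕ :=
  Nat.card {c : G'.ConnectedComponent // IsPathComponent G' c ∧ Odd (Nat.card c.supp)}

/-- e(G): the minimum of e(G') over all pec decompositions `G'` of `G`. -/
noncomputable def eMin (G : SimpleGraph V) : ℕ :=
  sInf {n | ∃ G' : SimpleGraph V, IsPec G G' ∧ evenPathCount G' = n}

/-- p(G): the minimum of p(G') over all pec decompositions `G'` of `G`. -/
noncomputable def pMin (G : SimpleGraph V) : ℕ :=
  sInf {n | ∃ G' : SimpleGraph V, IsPec G G' ∧ pathCount G' = n}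

/-- e_p(G): the minimum of e(G') over all pec decompositions `G'` of `G` with p(G') = p(G). -/
noncomputable def epMin (G : SimpleGraph V) : ℕ :=
  sInf {n | ∃ G' : SimpleGraph V, IsPec G G' ∧ pathCount G' = pMin G ∧ evenPathCount G' = n}

/-!
Split every pec decomposition `G'` into two disjoint matchings `H`, `H'`: each component of `G'`
is spanned by a path, possibly closed up into an even cycle, and its edges are coloured
alternately along that path, starting at one end. Then `H` misses exactly one vertex of every
even path of `G'` and none of any other component, while `H ∪ H'` has one edge fewer than vertices
on each path and as many on each cycle; so `2|H| + e(G') = n` and `|H| + |H'| + p(G') = n`.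
Conversely, the union of two disjoint matchings is a pec decomposition (around a cycle the two
matchings alternate), and no matching of `G'` covers an odd component. Together these give
`e(G) + 2ν(G) = n`, `λ(G) + p(G) = n` and `e_p(G) + 2μ(G) = n`, from which the theorem follows.
-/

open SimpleGraph

section Matchings

variable {G G' : SimpleGraph V} {M N : Set (Sym2 V)}

lemma degree'_eq_ncard (G : SimpleGraph V) (v : V) : degree' G v = (G.neighborSet v).ncard :=
  Nat.card_coe_set_eq _

lemma isMatchingSet_empty (G : SimpleGraph V) : IsMatchingSet G ∅ :=
  ⟨Set.empty_subset _, by simp⟩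

lemma IsMatchingSet.subset (hM : IsMatchingSet G M) (hNM : N ⊆ M) : IsMatchingSet G N :=
  ⟨hNM.trans hM.1, fun e he f hf => hM.2 e (hNM he) f (hNM hf)⟩

lemma IsMatchingSet.mono (hM : IsMatchingSet G' M) (h : G' ≤ G) : IsMatchingSet G M :=
  ⟨hM.1.trans (edgeSet_mono h), hM.2⟩

lemma IsMatchingSet.insert (hM : IsMatchingSet G M) {e : Sym2 V} (he : e ∈ G.edgeSet)
    (hdisj : ∀ f ∈ M, ∀ v ∈ e, v ∉ f) : IsMatchingSet G (insert e M) := by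
  refine ⟨Set.insert_subset he hM.1, ?_⟩
  rintro f (rfl | hf) g (rfl | hg) hfg v ⟨hvf, hvg⟩
  · exact hfg rfl
  · exact hdisj g hg v hvf hvg
  · exact hdisj f hf v hvg hvf
  · exact hM.2 f hf g hg hfg v ⟨hvf, hvg⟩

lemma IsMatchingSet.subsingleton_neighbors (hM : IsMatchingSet G M) (v : V) :
    {w | s(v, w) ∈ M}.Subsingleton := by
  intro w₁ h₁ w₂ h₂
  by_contra hne
  exact hM.2 _ h₁ _ h₂ (fun h => hne (Sym2.congr_right.mp h)) v
    ⟨Sym2.mem_mk_left _ _, Sym2.mem_mk_left _ _⟩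

lemma IsMatchingSet.ncard_verts [Finite V] (hM : IsMatchingSet G M) :
    {v | ∃ e ∈ M, v ∈ e}.ncard = 2 * M.ncard := by
  have hcover : {v | ∃ e ∈ M, v ∈ e} = ⋃ e ∈ M, {v | v ∈ e} := by ext; simp
  have hpair : ∀ e ∈ M, {v | v ∈ e}.ncard = 2 := by
    intro e he
    induction e with
    | h a b =>
      rw [show {v | v ∈ s(a, b)} = {a, b} by ext; simp, Set.ncard_pair]
      exact G.ne_of_adj (hM.1 he)
  rw [hcover, (Set.toFinite M).ncard_biUnion (s := fun e => {v | v ∈ e}) (fun _ _ => Set.toFinite _)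
    (fun e he f hf hef => Set.disjoint_left.2 fun v hve hvf => hM.2 e he f hf hef v ⟨hve, hvf⟩),
    finsum_mem_congr rfl hpair, finsum_mem_eq_finite_toFinset_sum _ (Set.toFinite M),
    Finset.sum_const, smul_eq_mul, Set.ncard_eq_toFinset_card _ (Set.toFinite M), mul_comm]

end Matchings

section Extremal

variable [Finite V] {G : SimpleGraph V}

lemma bddAbove_matchingNumber_set (G : SimpleGraph V) :
    BddAbove {n | ∃ M : Set (Sym2 V), IsMatchingSet G M ∧ M.ncard = n} :=
  ⟨Nat.card (Sym2 V), by rintro _ ⟨M, -, rfl⟩; exact Set.ncard_le_card M⟩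

lemma exists_matchingNumber (G : SimpleGraph V) :
    ∃ M, IsMatchingSet G M ∧ M.ncard = matchingNumber G :=
  Nat.sSup_mem (s := {n | ∃ M : Set (Sym2 V), IsMatchingSet G M ∧ M.ncard = n})
    ⟨0, ∅, isMatchingSet_empty G, Set.ncard_empty _⟩ (bddAbove_matchingNumber_set G)

lemma IsMatchingSet.ncard_le_matchingNumber {M : Set (Sym2 V)} (hM : IsMatchingSet G M) :
    M.ncard ≤ matchingNumber G :=
  le_csSup (bddAbove_matchingNumber_set G) ⟨M, hM, rfl⟩

lemma bddAbove_lambdaParam_set (G : SimpleGraph V) :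
    BddAbove {n | ∃ H H' : Set (Sym2 V), IsMatchingSet G H ∧ IsMatchingSet G H' ∧
      Disjoint H H' ∧ H.ncard + H'.ncard = n} :=
  ⟨2 * Nat.card (Sym2 V), by
    rintro _ ⟨H, H', -, -, -, rfl⟩
    linarith [Set.ncard_le_card H, Set.ncard_le_card H']⟩

lemma exists_lambdaParam (G : SimpleGraph V) :
    ∃ H H', IsMatchingSet G H ∧ IsMatchingSet G H' ∧ Disjoint H H' ∧
      H.ncard + H'.ncard = lambdaParam G :=
  Nat.sSup_mem (s := {n | ∃ H H' : Set (Sym2 V), IsMatchingSet G H ∧ IsMatchingSet G H' ∧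
      Disjoint H H' ∧ H.ncard + H'.ncard = n})
    ⟨0, ∅, ∅, isMatchingSet_empty G, isMatchingSet_empty G, disjoint_bot_left, by simp⟩
    (bddAbove_lambdaParam_set G)

lemma ncard_add_ncard_le_lambdaParam {H H' : Set (Sym2 V)} (hH : IsMatchingSet G H)
    (hH' : IsMatchingSet G H') (hd : Disjoint H H') : H.ncard + H'.ncard ≤ lambdaParam G :=
  le_csSup (bddAbove_lambdaParam_set G) ⟨H, H', hH, hH', hd, rfl⟩

lemma bddAbove_muParam_set (G : SimpleGraph V) :
    BddAbove {n | ∃ H H' : Set (Sym2 V), IsMatchingSet G H ∧ IsMatchingSet G H' ∧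
      Disjoint H H' ∧ H.ncard + H'.ncard = lambdaParam G ∧ H.ncard = n} :=
  ⟨Nat.card (Sym2 V), by rintro _ ⟨H, -, -, -, -, -, rfl⟩; exact Set.ncard_le_card H⟩

lemma exists_muParam (G : SimpleGraph V) :
    ∃ H H', IsMatchingSet G H ∧ IsMatchingSet G H' ∧ Disjoint H H' ∧
      H.ncard + H'.ncard = lambdaParam G ∧ H.ncard = muParam G := by
  obtain ⟨H, H', hH, hH', hd, hlam⟩ := exists_lambdaParam G
  exact Nat.sSup_mem (s := {n | ∃ H H' : Set (Sym2 V), IsMatchingSet G H ∧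
      IsMatchingSet G H' ∧ Disjoint H H' ∧ H.ncard + H'.ncard = lambdaParam G ∧ H.ncard = n})
    ⟨_, H, H', hH, hH', hd, hlam, rfl⟩ (bddAbove_muParam_set G)

lemma ncard_le_muParam {H H' : Set (Sym2 V)} (hH : IsMatchingSet G H) (hH' : IsMatchingSet G H')
    (hd : Disjoint H H') (hlam : H.ncard + H'.ncard = lambdaParam G) : H.ncard ≤ muParam G :=
  le_csSup (bddAbove_muParam_set G) ⟨H, H', hH, hH', hd, hlam, rfl⟩

end Extremal

section PecMinima

variable {G G' : SimpleGraph V}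

lemma isPec_bot (G : SimpleGraph V) : IsPec G ⊥ := by
  refine ⟨bot_le, fun v => ?_, fun v w hw => ?_⟩
  · simp [degree'_eq_ncard]
  · cases w with
    | nil => exact absurd rfl hw.ne_nil
    | cons h _ => exact h.elim

lemma exists_eMin (G : SimpleGraph V) :
    ∃ G', IsPec G G' ∧ evenPathCount G' = eMin G :=
  Nat.sInf_mem (s := {n | ∃ G', IsPec G G' ∧ evenPathCount G' = n}) ⟨_, ⊥, isPec_bot G, rfl⟩

lemma IsPec.eMin_le (h : IsPec G G') : eMin G ≤ evenPathCount G' :=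
  Nat.sInf_le ⟨G', h, rfl⟩

lemma exists_pMin (G : SimpleGraph V) :
    ∃ G', IsPec G G' ∧ pathCount G' = pMin G :=
  Nat.sInf_mem (s := {n | ∃ G', IsPec G G' ∧ pathCount G' = n}) ⟨_, ⊥, isPec_bot G, rfl⟩

lemma IsPec.pMin_le (h : IsPec G G') : pMin G ≤ pathCount G' :=
  Nat.sInf_le ⟨G', h, rfl⟩

lemma exists_epMin (G : SimpleGraph V) :
    ∃ G', IsPec G G' ∧ pathCount G' = pMin G ∧ evenPathCount G' = epMin G := by
  obtain ⟨G', hG', hp⟩ := exists_pMin G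
  exact Nat.sInf_mem (s := {n | ∃ G', IsPec G G' ∧ pathCount G' = pMin G ∧ evenPathCount G' = n})
    ⟨_, G', hG', hp, rfl⟩

lemma IsPec.epMin_le (h : IsPec G G') (hp : pathCount G' = pMin G) :
    epMin G ≤ evenPathCount G' :=
  Nat.sInf_le ⟨G', h, hp, rfl⟩

end PecMinima

namespace SimpleGraph.ConnectedComponent

variable {G : SimpleGraph V}

def edgeSet (c : G.ConnectedComponent) : Set (Sym2 V) :=
  {e | e ∈ G.edgeSet ∧ ∀ v ∈ e, v ∈ c.supp}

lemma edgeSet_subset (c : G.ConnectedComponent) : c.edgeSet ⊆ G.edgeSet := fun _ he => he.1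

lemma mem_edgeSet_of_mem {c : G.ConnectedComponent} {e : Sym2 V} (he : e ∈ G.edgeSet) {v : V}
    (hve : v ∈ e) (hv : v ∈ c.supp) : e ∈ c.edgeSet := by
  refine ⟨he, fun w hwe => ?_⟩
  induction e with
  | h a b =>
    rcases Sym2.mem_iff.1 hve with rfl | rfl <;> rcases Sym2.mem_iff.1 hwe with rfl | rfl
    · exact hv
    · exact c.mem_supp_congr_adj he |>.1 hv
    · exact c.mem_supp_congr_adj he |>.2 hv
    · exact hv

lemma pairwise_disjoint_edgeSet :
    Pairwise fun c c' : G.ConnectedComponent => Disjoint c.edgeSet c'.edgeSet := by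
  intro c c' hcc'
  refine Set.disjoint_left.2 fun e he he' => ?_
  induction e with
  | h a b => exact hcc' (eq_of_common_vertex (he.2 a (Sym2.mem_mk_left a b))
      (he'.2 a (Sym2.mem_mk_left a b)))

lemma iUnion_edgeSet : ⋃ c : G.ConnectedComponent, c.edgeSet = G.edgeSet := by
  refine Set.Subset.antisymm (Set.iUnion_subset edgeSet_subset) fun e he => ?_
  induction e with
  | h a b => exact Set.mem_iUnion.2 ⟨_, mem_edgeSet_of_mem he (Sym2.mem_mk_left a b) rfl⟩

lemma ncard_eq_sum_ncard_inter_edgeSet [Finite V] [Fintype G.ConnectedComponent]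
    {S : Set (Sym2 V)} (hS : S ⊆ G.edgeSet) :
    S.ncard = ∑ c : G.ConnectedComponent, (S ∩ c.edgeSet).ncard := by
  have hsplit : S = ⋃ c : G.ConnectedComponent, S ∩ c.edgeSet := by
    rw [← Set.inter_iUnion, iUnion_edgeSet, Set.inter_eq_left.2 hS]
  conv_lhs => rw [hsplit]
  rw [Set.ncard_iUnion_of_finite (fun _ => Set.toFinite _) (fun c c' hcc' =>
    (pairwise_disjoint_edgeSet hcc').mono Set.inter_subset_right Set.inter_subset_right),
    finsum_eq_sum_of_fintype]

lemma natCard_eq_sum_natCard_supp [Finite V] [Fintype G.ConnectedComponent] :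
    Nat.card V = ∑ c : G.ConnectedComponent, Nat.card c.supp := by
  rw [← Set.ncard_univ, ← iUnion_connectedComponentSupp G, Set.ncard_iUnion_of_finite
    (fun _ => Set.toFinite _) (pairwise_disjoint_supp_connectedComponent G),
    finsum_eq_sum_of_fintype]
  simp_rw [Nat.card_coe_set_eq]

lemma iUnion_inter_edgeSet {S : G.ConnectedComponent → Set (Sym2 V)}
    (hS : ∀ c, S c ⊆ c.edgeSet) (c : G.ConnectedComponent) : (⋃ c', S c') ∩ c.edgeSet = S c := by
  refine Set.Subset.antisymm ?_ fun e he => ⟨Set.mem_iUnion.2 ⟨c, he⟩, hS c he⟩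
  rintro e ⟨he, hec⟩
  obtain ⟨c', hc'⟩ := Set.mem_iUnion.1 he
  obtain rfl : c' = c := by_contra fun h =>
    Set.disjoint_left.1 (pairwise_disjoint_edgeSet h) (hS c' hc') hec
  exact hc'

lemma isMatchingSet_iUnion {S : G.ConnectedComponent → Set (Sym2 V)} (hS : ∀ c, S c ⊆ c.edgeSet)
    (hmatch : ∀ c, IsMatchingSet G (S c)) : IsMatchingSet G (⋃ c, S c) := by
  refine ⟨Set.iUnion_subset fun c => (hS c).trans (edgeSet_subset c), ?_⟩
  intro e he f hf hef v ⟨hve, hvf⟩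
  obtain ⟨c, hc⟩ := Set.mem_iUnion.1 he
  obtain ⟨c', hc'⟩ := Set.mem_iUnion.1 hf
  obtain rfl : c = c' := eq_of_common_vertex ((hS c hc).2 v hve) ((hS c' hc').2 v hvf)
  exact (hmatch c).2 e hc f hc' hef v ⟨hve, hvf⟩

end SimpleGraph.ConnectedComponent

lemma natCard_subtype_eq_sum_ite {ι : Type*} [Fintype ι] (P : ι → Prop) [DecidablePred P] :
    Nat.card {i // P i} = ∑ i, if P i then 1 else 0 := by
  rw [Finset.sum_boole, Nat.card_eq_fintype_card, Fintype.card_subtype, Nat.cast_id]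

section MatchingBound

variable [Finite V] {G : SimpleGraph V} {M : Set (Sym2 V)}

lemma IsMatchingSet.two_mul_ncard_inter_edgeSet_le (hM : IsMatchingSet G M)
    (c : G.ConnectedComponent) : 2 * (M ∩ c.edgeSet).ncard ≤ Nat.card c.supp := by
  rw [← (hM.subset Set.inter_subset_left).ncard_verts, Nat.card_coe_set_eq]
  refine Set.ncard_le_ncard ?_ (Set.toFinite _)
  rintro v ⟨e, he, hve⟩
  exact he.2.2 v hve

/-- An odd component cannot be covered by a matching, so it leaves a vertex unmatched. -/
lemma IsMatchingSet.two_mul_ncard_add_evenPathCount_le (hM : IsMatchingSet G M) :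
    2 * M.ncard + evenPathCount G ≤ Nat.card V := by
  classical
  have := Fintype.ofFinite G.ConnectedComponent
  rw [evenPathCount, natCard_subtype_eq_sum_ite,
    ConnectedComponent.natCard_eq_sum_natCard_supp (G := G),
    ConnectedComponent.ncard_eq_sum_ncard_inter_edgeSet hM.1, Finset.mul_sum,
    ← Finset.sum_add_distrib]
  refine Finset.sum_le_sum fun c _ => ?_
  have hc := hM.two_mul_ncard_inter_edgeSet_le c
  split_ifs with hodd
  · obtain ⟨k, hk⟩ := hodd.2
    omega
  · omega

end MatchingBound

namespace SimpleGraph.Walk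

variable {G : SimpleGraph V} {u v : V}

lemma mk_getVert_mem_edges (p : G.Walk u v) {i : ℕ} (hi : i < p.length) :
    s(p.getVert i, p.getVert (i + 1)) ∈ p.edges :=
  (mk_mem_edges_iff_exists p).2 ⟨i, hi, rfl⟩

lemma IsTrail.eq_of_mk_getVert_eq {p : G.Walk u v} (hp : p.IsTrail) {i j : ℕ}
    (hi : i < p.length) (hj : j < p.length)
    (h : s(p.getVert i, p.getVert (i + 1)) = s(p.getVert j, p.getVert (j + 1))) : i = j := by
  rw [← getElem_edges (by simpa using hi), ← getElem_edges (by simpa using hj)] at h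
  exact hp.edges_nodup.getElem_inj_iff.1 h

/-- Membership in `H` alternates along the cycle, so it can only close up after an even number
of steps. -/
lemma IsCycle.even_length_of_alternating {p : G.Walk u u} (hp : p.IsCycle) (H : Set (Sym2 V))
    (halt : ∀ e ∈ p.edges, ∀ f ∈ p.edges, e ≠ f → ∀ w ∈ e, w ∈ f → (e ∈ H ↔ f ∉ H)) :
    Even p.length := by
  have hL := hp.three_le_length
  set P : ℕ → Prop := fun i => s(p.getVert i, p.getVert (i + 1)) ∈ H
  have hnext : ∀ i j, i < p.length → j < p.length → i ≠ j →
      p.getVert (i + 1) = p.getVert j → (P i ↔ ¬P j) := fun i j hi hj hij hv =>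
    halt _ (p.mk_getVert_mem_edges hi) _ (p.mk_getVert_mem_edges hj)
      (fun h => hij (hp.isTrail.eq_of_mk_getVert_eq hi hj h)) _ (Sym2.mem_mk_right _ _)
      (hv ▸ Sym2.mem_mk_left _ _)
  have hparity : ∀ i < p.length, (P i ↔ (P 0 ↔ Even i)) := by
    intro i
    induction i with
    | zero => simp
    | succ i ih =>
      intro hi
      have hstep := hnext i (i + 1) (by omega) hi (by omega) rfl
      have := ih (by omega)
      rw [Nat.even_add_one]
      tauto
  have hwrap := hnext (p.length - 1) 0 (by omega) (by omega) (by omega)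
    (by rw [Nat.sub_add_cancel (by omega), getVert_length, getVert_zero])
  have := hparity (p.length - 1) (by omega)
  have hodd : ¬Even (p.length - 1) := by tauto
  rw [← Nat.sub_add_cancel (show 1 ≤ p.length by omega), Nat.even_add_one]
  exact hodd

end SimpleGraph.Walk

section UnionOfMatchings

variable {G : SimpleGraph V} {H H' : Set (Sym2 V)}

lemma edgeSet_fromEdgeSet_of_subset {S : Set (Sym2 V)} (hS : S ⊆ G.edgeSet) :
    (fromEdgeSet S).edgeSet = S := by
  rw [edgeSet_fromEdgeSet, sdiff_eq_left]
  exact Set.disjoint_left.2 fun e he hdiag => G.not_isDiag_of_mem_edgeSet (hS he) hdiag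

lemma IsMatchingSet.isMatchingSet_fromEdgeSet {M S : Set (Sym2 V)} (hM : IsMatchingSet G M)
    (hMS : M ⊆ S) (hS : S ⊆ G.edgeSet) : IsMatchingSet (fromEdgeSet S) M :=
  ⟨(edgeSet_fromEdgeSet_of_subset hS).symm ▸ hMS, hM.2⟩

lemma isPec_fromEdgeSet_union [Finite V] (hH : IsMatchingSet G H) (hH' : IsMatchingSet G H') :
    IsPec G (fromEdgeSet (H ∪ H')) := by
  have hE := edgeSet_fromEdgeSet_of_subset (Set.union_subset hH.1 hH'.1)
  refine ⟨?_, fun v => ?_, fun v p hp => ?_⟩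
  · rw [← edgeSet_subset_edgeSet, hE]
    exact Set.union_subset hH.1 hH'.1
  · have hsub : (fromEdgeSet (H ∪ H')).neighborSet v ⊆ {w | s(v, w) ∈ H} ∪ {w | s(v, w) ∈ H'} :=
      fun w hw => (fromEdgeSet_adj _).1 hw |>.1
    have h1 := Set.ncard_le_one_iff_subsingleton.2 (hH.subsingleton_neighbors v)
    have h2 := Set.ncard_le_one_iff_subsingleton.2 (hH'.subsingleton_neighbors v)
    rw [degree'_eq_ncard]
    linarith [Set.ncard_le_ncard hsub (Set.toFinite _), Set.ncard_union_le
      {w | s(v, w) ∈ H} {w | s(v, w) ∈ H'}]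
  · refine hp.even_length_of_alternating H fun e he f hf hef w hwe hwf => ?_
    have he' : e ∈ H ∪ H' := hE ▸ p.edges_subset_edgeSet he
    have hf' : f ∈ H ∪ H' := hE ▸ p.edges_subset_edgeSet hf
    have hnotH := fun (heH : e ∈ H) (hfH : f ∈ H) => hH.2 e heH f hfH hef w ⟨hwe, hwf⟩
    have hnotH' := fun (heH : e ∈ H') (hfH : f ∈ H') => hH'.2 e heH f hfH hef w ⟨hwe, hwf⟩
    rcases he' with he' | he' <;> rcases hf' with hf' | hf' <;> tauto

end UnionOfMatchings

namespace SimpleGraph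

variable {G : SimpleGraph V} {u v x y : V}

lemma Walk.IsPath.getVert_mem_mk_iff {p : G.Walk u v} (hp : p.IsPath) {i k : ℕ}
    (hi : i < p.length) (hk : k ≤ p.length) :
    p.getVert k ∈ s(p.getVert i, p.getVert (i + 1)) ↔ k = i ∨ k = i + 1 := by
  rw [Sym2.mem_iff]
  constructor
  · rintro (h | h)
    · exact Or.inl (hp.getVert_injOn hk (show i ≤ p.length by omega) h)
    · exact Or.inr (hp.getVert_injOn hk (show i + 1 ≤ p.length by omega) h)
  · rintro (rfl | rfl) <;> simp

lemma Reachable.mem_of_forall_adj {S : Set V} (hS : ∀ a ∈ S, ∀ b, G.Adj a b → b ∈ S)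
    (h : G.Reachable u v) (hu : u ∈ S) : v ∈ S := by
  obtain ⟨q⟩ := h
  induction q with
  | nil => exact hu
  | cons hadj _ ih => exact ih (hS _ hu _ hadj)

lemma eq_or_eq_of_degree'_le_two [Finite V] (hv : degree' G v ≤ 2) {a b w : V}
    (ha : G.Adj v a) (hb : G.Adj v b) (hab : a ≠ b) (hw : G.Adj v w) : w = a ∨ w = b := by
  by_contra! h
  have h3 : ({w, a, b} : Set V).ncard = 3 := by
    rw [Set.ncard_insert_of_notMem (by simp [h.1, h.2]), Set.ncard_pair hab]
  have := Set.ncard_le_ncard (s := {w, a, b}) (t := G.neighborSet v)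
    (by rintro z (rfl | rfl | rfl) <;> assumption)
  rw [h3, ← degree'_eq_ncard] at this
  omega

lemma Walk.IsPath.eq_getVert_of_adj [Finite V] {p : G.Walk u v} (hp : p.IsPath)
    (hdeg : ∀ v, degree' G v ≤ 2) {k : ℕ} (hk0 : 0 < k) (hkL : k < p.length) {w : V}
    (hw : G.Adj (p.getVert k) w) : w = p.getVert (k - 1) ∨ w = p.getVert (k + 1) := by
  have hprev := p.adj_getVert_succ (i := k - 1) (by omega)
  rw [Nat.sub_add_cancel hk0] at hprev
  exact eq_or_eq_of_degree'_le_two (hdeg _) hprev.symm (p.adj_getVert_succ hkL)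
    (hp.getVert_injOn.ne (show k - 1 ≤ p.length by omega) (show k + 1 ≤ p.length by omega)
      (by omega)) hw

lemma Walk.mem_supp_of_mem_support {c : G.ConnectedComponent} (p : G.Walk u v) (hu : u ∈ c.supp)
    {w : V} (hw : w ∈ p.support) : w ∈ c.supp := by
  classical
  exact (c.mem_supp_iff u |>.1 hu) ▸ (ConnectedComponent.sound ⟨p.takeUntil w hw⟩).symm

lemma Walk.mem_edgeSet_of_mem_edges {c : G.ConnectedComponent} (p : G.Walk u v)
    (hu : u ∈ c.supp) {e : Sym2 V} (he : e ∈ p.edges) : e ∈ c.edgeSet := by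
  induction e with
  | h a b =>
    exact ConnectedComponent.mem_edgeSet_of_mem (p.edges_subset_edgeSet he)
      (Sym2.mem_mk_left a b) (p.mem_supp_of_mem_support hu (p.fst_mem_support_of_mem_edges he))

def Walk.IsLongestPathFrom (c : G.ConnectedComponent) (p : G.Walk x y) : Prop :=
  p.IsPath ∧ x ∈ c.supp ∧
    ∀ (x' y' : V) (q : G.Walk x' y'), q.IsPath → x' ∈ c.supp → q.length ≤ p.length

lemma exists_isLongestPathFrom [Finite V] (c : G.ConnectedComponent) :
    ∃ (x y : V) (p : G.Walk x y), p.IsLongestPathFrom c := by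
  have := Fintype.ofFinite V
  obtain ⟨x₀, hx₀⟩ := c.nonempty_supp
  have hbdd : BddAbove {n | ∃ (x y : V) (p : G.Walk x y), p.IsPath ∧ x ∈ c.supp ∧
      p.length = n} := ⟨Fintype.card V, by rintro _ ⟨x, y, p, hp, -, rfl⟩; exact hp.length_lt.le⟩
  obtain ⟨x, y, p, hp, hx, hlen⟩ := Nat.sSup_mem (s := {n | ∃ (x y : V) (p : G.Walk x y),
    p.IsPath ∧ x ∈ c.supp ∧ p.length = n}) ⟨0, x₀, x₀, .nil, .nil, hx₀, rfl⟩ hbdd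
  exact ⟨x, y, p, hp, hx, fun x' y' q hq hx' => hlen ▸ le_csSup hbdd ⟨x', y', q, hq, hx', rfl⟩⟩

namespace Walk.IsLongestPathFrom

variable {c : G.ConnectedComponent} {p : G.Walk x y}

lemma mem_supp (h : p.IsLongestPathFrom c) {v : V} (hv : v ∈ p.support) : v ∈ c.supp :=
  p.mem_supp_of_mem_support h.2.1 hv

lemma reverse (h : p.IsLongestPathFrom c) : p.reverse.IsLongestPathFrom c :=
  ⟨h.1.reverse, h.mem_supp p.end_mem_support, fun x' y' q hq hx' => by
    simpa using h.2.2 x' y' q hq hx'⟩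

/-- A longest path cannot be extended at its start, so the neighbours of its start lie on it;
a neighbour strictly inside would have degree three. -/
lemma adj_start [Finite V] (h : p.IsLongestPathFrom c) (hdeg : ∀ v, degree' G v ≤ 2) {w : V}
    (hw : G.Adj x w) : w = p.getVert 1 ∨ (2 ≤ p.length ∧ w = y) := by
  obtain ⟨hp, hx, hmax⟩ := h
  have hws : w ∈ p.support := by
    by_contra hws
    have := hmax w y (cons hw.symm p) ((cons_isPath_iff _ _).2 ⟨hp, hws⟩)
      ((c.mem_supp_congr_adj hw).1 hx)
    simp at this
  obtain ⟨j, rfl, hj⟩ := mem_support_iff_exists_getVert.1 hws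
  have hj0 : j ≠ 0 := by
    rintro rfl
    simp at hw
  by_cases hj1 : j = 1
  · exact Or.inl (by rw [hj1])
  by_cases hjL : j = p.length
  · exact Or.inr ⟨by omega, by rw [hjL, getVert_length]⟩
  rcases hp.eq_getVert_of_adj hdeg (by omega) (by omega) hw.symm with h | h <;>
  · have := hp.getVert_injOn (show 0 ≤ p.length by omega) (by simp; omega) (p.getVert_zero.trans h)
    omega

lemma adj_end [Finite V] (h : p.IsLongestPathFrom c) (hdeg : ∀ v, degree' G v ≤ 2) {w : V}
    (hw : G.Adj y w) : w = p.getVert (p.length - 1) ∨ (2 ≤ p.length ∧ w = x) := by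
  simpa [getVert_reverse] using h.reverse.adj_start hdeg hw

lemma mk_eq_of_adj [Finite V] (h : p.IsLongestPathFrom c) (hdeg : ∀ v, degree' G v ≤ 2)
    {k : ℕ} (hk : k ≤ p.length) {w : V} (hw : G.Adj (p.getVert k) w) :
    (∃ i < p.length, s(p.getVert k, w) = s(p.getVert i, p.getVert (i + 1))) ∨
      (2 ≤ p.length ∧ s(p.getVert k, w) = s(x, y)) := by
  rcases Nat.eq_zero_or_pos k with rfl | hk0
  · rw [getVert_zero] at hw ⊢
    rcases h.adj_start hdeg hw with rfl | ⟨hL, rfl⟩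
    · refine Or.inl ⟨0, Nat.pos_of_ne_zero fun hL => ?_, by simp⟩
      rw [getVert_of_length_le p (by omega), ← p.eq_of_length_eq_zero hL] at hw
      exact G.irrefl hw
    · exact Or.inr ⟨hL, rfl⟩
  rcases eq_or_lt_of_le hk with rfl | hkL
  · rw [getVert_length] at hw ⊢
    rcases h.adj_end hdeg hw with rfl | ⟨hL, rfl⟩
    · exact Or.inl ⟨p.length - 1, by omega, by rw [Nat.sub_add_cancel hk0, getVert_length,
        Sym2.eq_swap]⟩
    · exact Or.inr ⟨hL, Sym2.eq_swap⟩
  rcases h.1.eq_getVert_of_adj hdeg hk0 hkL hw with rfl | rfl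
  · exact Or.inl ⟨k - 1, by omega, by rw [Nat.sub_add_cancel hk0, Sym2.eq_swap]⟩
  · exact Or.inl ⟨k, hkL, rfl⟩

end Walk.IsLongestPathFrom

theorem ConnectedComponent.exists_isPath_of_degree'_le_two [Finite V]
    (hdeg : ∀ v, degree' G v ≤ 2) (c : G.ConnectedComponent) :
    ∃ (x y : V) (p : G.Walk x y), p.IsPath ∧ c.supp = {v | v ∈ p.support} ∧
      ∀ e ∈ c.edgeSet, (∃ i < p.length, e = s(p.getVert i, p.getVert (i + 1))) ∨
        (2 ≤ p.length ∧ e = s(x, y)) := by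
  obtain ⟨x, y, p, h⟩ := exists_isLongestPathFrom c
  have hclosed : ∀ a ∈ {v | v ∈ p.support}, ∀ b, G.Adj a b → b ∈ {v | v ∈ p.support} := by
    intro a ha b hab
    obtain ⟨k, rfl, hk⟩ := Walk.mem_support_iff_exists_getVert.1 ha
    have hb : b ∈ s(p.getVert k, b) := Sym2.mem_mk_right _ _
    rcases h.mk_eq_of_adj hdeg hk hab with ⟨i, -, he⟩ | ⟨-, he⟩ <;> rw [he] at hb <;>
      rcases Sym2.mem_iff.1 hb with rfl | rfl <;> simp [Walk.getVert_mem_support]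
  have hsupp : c.supp = {v | v ∈ p.support} := Set.ext fun v =>
    ⟨fun hv => (c.reachable_of_mem_supp h.2.1 hv).mem_of_forall_adj hclosed p.start_mem_support,
      h.mem_supp⟩
  refine ⟨x, y, p, h.1, hsupp, fun e he => ?_⟩
  induction e with
  | h a b =>
    have ha : a ∈ {v | v ∈ p.support} := hsupp ▸ he.2 a (Sym2.mem_mk_left a b)
    obtain ⟨k, rfl, hk⟩ := Walk.mem_support_iff_exists_getVert.1 ha
    exact h.mk_eq_of_adj hdeg hk he.1

end SimpleGraph

namespace SimpleGraph.Walk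

variable {G : SimpleGraph V} {x y : V} {p : G.Walk x y}

/-- The edges `s(p_i, p_(i+1))` with `i = 2 k + r`; the bound `(p.length + 1 - r) / 2` counts
the `k` with `2 k + r < p.length`. -/
def alternateEdges (p : G.Walk x y) (r : ℕ) : Set (Sym2 V) :=
  (fun k => s(p.getVert (2 * k + r), p.getVert (2 * k + r + 1))) '' Set.Iio ((p.length + 1 - r) / 2)

lemma IsPath.le_succ_of_mem_mk (hp : p.IsPath) {i j : ℕ} (hi : i < p.length) (hj : j < p.length)
    {w : V} (hwi : w ∈ s(p.getVert i, p.getVert (i + 1)))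
    (hwj : w ∈ s(p.getVert j, p.getVert (j + 1))) : i ≤ j + 1 ∧ j ≤ i + 1 := by
  rcases Sym2.mem_iff.1 hwi with rfl | rfl
  · have := (hp.getVert_mem_mk_iff hj hi.le).1 hwj
    omega
  · have := (hp.getVert_mem_mk_iff hj hi).1 hwj
    omega

lemma IsPath.isMatchingSet_alternateEdges (hp : p.IsPath) (r : ℕ) :
    IsMatchingSet G (p.alternateEdges r) := by
  refine ⟨?_, ?_⟩
  · rintro _ ⟨k, hk, rfl⟩
    exact p.adj_getVert_succ (by simp only [Set.mem_Iio] at hk; omega)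
  · rintro _ ⟨k, hk, rfl⟩ _ ⟨l, hl, rfl⟩ hkl w ⟨hwk, hwl⟩
    simp only [Set.mem_Iio] at hk hl
    have := hp.le_succ_of_mem_mk (by omega) (by omega) hwk hwl
    exact hkl (by rw [show l = k by omega])

lemma IsPath.ncard_alternateEdges (hp : p.IsPath) (r : ℕ) :
    (p.alternateEdges r).ncard = (p.length + 1 - r) / 2 := by
  rw [alternateEdges, Set.InjOn.ncard_image, Set.ncard_Iio_nat]
  intro k hk l hl hkl
  simp only [Set.mem_Iio] at hk hl
  have := hp.isTrail.eq_of_mk_getVert_eq (by omega) (by omega) hkl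
  omega

lemma IsPath.disjoint_alternateEdges (hp : p.IsPath) :
    Disjoint (p.alternateEdges 0) (p.alternateEdges 1) := by
  refine Set.disjoint_left.2 ?_
  rintro _ ⟨k, hk, rfl⟩ ⟨l, hl, hkl⟩
  simp only [Set.mem_Iio] at hk hl
  have := hp.isTrail.eq_of_mk_getVert_eq (by omega) (by omega) hkl
  omega

lemma alternateEdges_zero_union_one (p : G.Walk x y) :
    p.alternateEdges 0 ∪ p.alternateEdges 1 =
      {e | ∃ i < p.length, e = s(p.getVert i, p.getVert (i + 1))} := by
  ext e
  simp only [alternateEdges, Set.mem_union, Set.mem_image, Set.mem_Iio, Set.mem_ofPred_eq]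
  constructor
  · rintro (⟨k, hk, rfl⟩ | ⟨k, hk, rfl⟩)
    · exact ⟨2 * k + 0, by omega, rfl⟩
    · exact ⟨2 * k + 1, by omega, rfl⟩
  · rintro ⟨i, hi, rfl⟩
    rcases Nat.even_or_odd' i with ⟨k, rfl | rfl⟩
    · exact Or.inl ⟨k, by omega, rfl⟩
    · exact Or.inr ⟨k, by omega, rfl⟩

lemma IsPath.mk_ne_of_two_le_length (hp : p.IsPath) (hL : 2 ≤ p.length) {i : ℕ}
    (hi : i < p.length) : s(x, y) ≠ s(p.getVert i, p.getVert (i + 1)) := by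
  intro h
  have hx : p.getVert 0 ∈ s(p.getVert i, p.getVert (i + 1)) := by
    rw [← h, getVert_zero]
    exact Sym2.mem_mk_left x y
  have hy : p.getVert p.length ∈ s(p.getVert i, p.getVert (i + 1)) := by
    rw [← h, getVert_length]
    exact Sym2.mem_mk_right x y
  have := (hp.getVert_mem_mk_iff hi (Nat.zero_le _)).1 hx
  have := (hp.getVert_mem_mk_iff hi le_rfl).1 hy
  omega

lemma IsPath.isCycle_cons (hp : p.IsPath) (hL : 2 ≤ p.length) (h : G.Adj y x) :
    (cons h p).IsCycle := by
  refine (cons_isCycle_iff p h).2 ⟨hp, fun hmem => ?_⟩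
  obtain ⟨i, hi, he⟩ := (mk_mem_edges_iff_exists p).1 hmem
  exact hp.mk_ne_of_two_le_length hL hi (he.trans Sym2.eq_swap).symm

lemma IsPath.mk_notMem_alternateEdges (hp : p.IsPath) (hL : 2 ≤ p.length) (r : ℕ) :
    s(x, y) ∉ p.alternateEdges r := by
  rintro ⟨k, hk, h⟩
  simp only [Set.mem_Iio] at hk
  exact hp.mk_ne_of_two_le_length hL (by omega) h.symm

/-- On a path of odd length the last edge has even index, so the edge joining the ends only
meets edges of even index. -/
lemma IsPath.isMatchingSet_insert_alternateEdges_one (hp : p.IsPath) (hodd : Odd p.length)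
    (hxy : G.Adj x y) : IsMatchingSet G (insert s(x, y) (p.alternateEdges 1)) := by
  obtain ⟨m, hm⟩ := hodd
  refine (hp.isMatchingSet_alternateEdges 1).insert hxy ?_
  rintro _ ⟨k, hk, rfl⟩ w hw hwk
  simp only [Set.mem_Iio] at hk
  rcases Sym2.mem_iff.1 hw with h | h <;> subst w
  · have := (hp.getVert_mem_mk_iff (i := 2 * k + 1) (by omega) (Nat.zero_le _)).1
      (by rw [getVert_zero]; exact hwk)
    omega
  · have := (hp.getVert_mem_mk_iff (i := 2 * k + 1) (by omega) le_rfl).1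
      (by rw [getVert_length]; exact hwk)
    omega

end SimpleGraph.Walk

namespace SimpleGraph

variable {G : SimpleGraph V} {x y : V}

lemma Walk.IsPath.ncard_support {p : G.Walk x y} (hp : p.IsPath) :
    {v | v ∈ p.support}.ncard = p.length + 1 := by
  classical
  rw [show {v | v ∈ p.support} = (p.support.toFinset : Set V) by ext; simp, Set.ncard_coe_finset,
    List.toFinset_card_of_nodup hp.support_nodup, length_support]

/-- A cycle cannot use only edges of a path: at the vertex of the cycle that comes first along the
path, both cycle edges would have to be the path edge leaving that vertex. -/
lemma Walk.IsPath.not_isCycle_of_forall_mem_edges {p : G.Walk x y} (hp : p.IsPath) {v : V}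
    {q : G.Walk v v} (hsub : ∀ e ∈ q.edges, ∃ i < p.length, e = s(p.getVert i, p.getVert (i + 1))) :
    ¬q.IsCycle := by
  classical
  intro hq
  have hnbr : ∀ w ∈ q.support, ∃ a b, a ≠ b ∧ s(w, a) ∈ q.edges ∧ s(w, b) ∈ q.edges := by
    intro w hw
    obtain ⟨a, b, hab, hset⟩ := Set.ncard_eq_two.1 (hq.ncard_neighborSet_toSubgraph_eq_two hw)
    have ha : a ∈ q.toSubgraph.neighborSet w := hset ▸ Set.mem_insert a {b}
    have hb : b ∈ q.toSubgraph.neighborSet w := hset ▸ Set.mem_insert_of_mem a rfl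
    exact ⟨a, b, hab, adj_toSubgraph_iff_mem_edges.1 ha, adj_toSubgraph_iff_mem_edges.1 hb⟩
  have hon : ∃ k, k ≤ p.length ∧ p.getVert k ∈ q.support := by
    obtain ⟨a, -, -, ha, -⟩ := hnbr v q.start_mem_support
    obtain ⟨i, hi, he⟩ := hsub _ ha
    have hv : v ∈ s(p.getVert i, p.getVert (i + 1)) := he ▸ Sym2.mem_mk_left v a
    rcases Sym2.mem_iff.1 hv with h | h
    · exact ⟨i, hi.le, h ▸ q.start_mem_support⟩
    · exact ⟨i + 1, hi, h ▸ q.start_mem_support⟩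
  have hm := Nat.find_spec hon
  have honly : ∀ a, s(p.getVert (Nat.find hon), a) ∈ q.edges →
      a = p.getVert (Nat.find hon + 1) := by
    intro a ha
    obtain ⟨i, hi, he⟩ := hsub _ ha
    have hmem : p.getVert (Nat.find hon) ∈ s(p.getVert i, p.getVert (i + 1)) :=
      he ▸ Sym2.mem_mk_left _ _
    rcases (hp.getVert_mem_mk_iff hi hm.1).1 hmem with hmi | hmi
    · rw [hmi] at he ⊢
      exact Sym2.congr_right.1 he
    · have := Nat.find_min' hon ⟨hi.le, q.fst_mem_support_of_mem_edges (he ▸ ha)⟩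
      omega
  obtain ⟨a, b, hab, ha, hb⟩ := hnbr _ hm.2
  exact hab ((honly a ha).trans (honly b hb).symm)

open Walk in
open scoped Classical in
theorem ConnectedComponent.exists_isMatchingSet_split [Finite V] (hdeg : ∀ v, degree' G v ≤ 2)
    (hcyc : ∀ (v : V) (w : G.Walk v v), w.IsCycle → Even w.length) (c : G.ConnectedComponent) :
    ∃ H H', IsMatchingSet G H ∧ IsMatchingSet G H' ∧ Disjoint H H' ∧ H ∪ H' = c.edgeSet ∧
      2 * H.ncard + (if IsPathComponent G c ∧ Odd (Nat.card c.supp) then 1 else 0) =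
        Nat.card c.supp ∧
      H.ncard + H'.ncard + (if IsPathComponent G c then 1 else 0) = Nat.card c.supp := by
  obtain ⟨x, y, p, hp, hsupp, hedges⟩ := c.exists_isPath_of_degree'_le_two hdeg
  have hcard : Nat.card c.supp = p.length + 1 := by
    rw [Nat.card_coe_set_eq, hsupp, hp.ncard_support]
  have hpe : p.alternateEdges 0 ∪ p.alternateEdges 1 ⊆ c.edgeSet := by
    rw [alternateEdges_zero_union_one]
    rintro _ ⟨i, hi, rfl⟩
    exact mem_edgeSet_of_mem (p.adj_getVert_succ hi) (Sym2.mem_mk_left _ _)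
      (hsupp ▸ p.getVert_mem_support i)
  have n0 := hp.ncard_alternateEdges 0
  have n1 := hp.ncard_alternateEdges 1
  by_cases hclose : G.Adj x y ∧ 2 ≤ p.length
  · have hcycle := hp.isCycle_cons hclose.2 hclose.1.symm
    have hodd : Odd p.length := by
      have := hcyc y _ hcycle
      rwa [length_cons, Nat.even_add_one, Nat.not_even_iff_odd] at this
    have hnpc : ¬IsPathComponent G c := fun h =>
      h.2 y ((c.mem_supp_iff y).1 (hsupp ▸ p.end_mem_support)) _ hcycle
    have hxy := hp.mk_notMem_alternateEdges hclose.2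
    refine ⟨p.alternateEdges 0, insert s(x, y) (p.alternateEdges 1),
      hp.isMatchingSet_alternateEdges 0, hp.isMatchingSet_insert_alternateEdges_one hodd hclose.1,
      Set.disjoint_insert_right.2 ⟨hxy 0, hp.disjoint_alternateEdges⟩, ?_, ?_, ?_⟩
    · refine Set.Subset.antisymm (Set.union_insert ▸ Set.insert_subset
        (mem_edgeSet_of_mem hclose.1 (Sym2.mem_mk_left x y) (hsupp ▸ p.start_mem_support)) hpe)
        fun e he => ?_
      rw [Set.union_insert, alternateEdges_zero_union_one]
      rcases hedges e he with h | ⟨-, rfl⟩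
      · exact Or.inr h
      · exact Or.inl rfl
    · obtain ⟨m, hm⟩ := hodd
      rw [if_neg fun h => hnpc h.1, n0, hcard]
      omega
    · obtain ⟨m, hm⟩ := hodd
      rw [if_neg hnpc, n0, Set.ncard_insert_of_notMem (hxy 1), n1, hcard]
      omega
  · have hpath : ∀ e ∈ c.edgeSet, ∃ i < p.length, e = s(p.getVert i, p.getVert (i + 1)) :=
      fun e he => (hedges e he).resolve_right (by rintro ⟨hL, rfl⟩; exact hclose ⟨he.1, hL⟩)
    have hpc : IsPathComponent G c := ⟨fun v _ => hdeg v, fun v hv q =>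
      hp.not_isCycle_of_forall_mem_edges fun e he =>
        hpath e (q.mem_edgeSet_of_mem_edges ((c.mem_supp_iff v).2 hv) he)⟩
    refine ⟨p.alternateEdges 0, p.alternateEdges 1, hp.isMatchingSet_alternateEdges 0,
      hp.isMatchingSet_alternateEdges 1, hp.disjoint_alternateEdges,
      Set.Subset.antisymm hpe (alternateEdges_zero_union_one p ▸ hpath), ?_, ?_⟩
    · rw [n0, hcard]
      split_ifs with h
      · obtain ⟨m, hm⟩ := h.2
        omega
      · obtain ⟨m, hm⟩ := Nat.not_odd_iff_even.1 fun ho => h ⟨hpc, ho⟩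
        omega
    · rw [if_pos hpc, n0, n1, hcard]
      omega

end SimpleGraph

section Decomposition

variable [Finite V] {G G' : SimpleGraph V} {H H' : Set (Sym2 V)}

open ConnectedComponent in
theorem IsPec.exists_isMatchingSet_split (h : IsPec G G') :
    ∃ H H', IsMatchingSet G H ∧ IsMatchingSet G H' ∧ Disjoint H H' ∧ H ∪ H' = G'.edgeSet ∧
      2 * H.ncard + evenPathCount G' = Nat.card V ∧
      H.ncard + H'.ncard + pathCount G' = Nat.card V := by
  classical
  obtain ⟨hle, hdeg, hcyc⟩ := h
  have := Fintype.ofFinite G'.ConnectedComponent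
  choose H H' hH hH' hdisj hunion hcount hcount' using
    ConnectedComponent.exists_isMatchingSet_split hdeg hcyc
  have hsub (c : G'.ConnectedComponent) : H c ⊆ c.edgeSet := hunion c ▸ Set.subset_union_left
  have hsub' (c : G'.ConnectedComponent) : H' c ⊆ c.edgeSet := hunion c ▸ Set.subset_union_right
  have hunion' : (⋃ c, H c) ∪ (⋃ c, H' c) = G'.edgeSet := by
    rw [← Set.iUnion_union_distrib, ← iUnion_edgeSet]
    exact Set.iUnion_congr hunion
  have hE : ⋃ c, H c ⊆ G'.edgeSet := hunion' ▸ Set.subset_union_left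
  have hE' : ⋃ c, H' c ⊆ G'.edgeSet := hunion' ▸ Set.subset_union_right
  refine ⟨⋃ c, H c, ⋃ c, H' c, (isMatchingSet_iUnion hsub hH).mono hle,
    (isMatchingSet_iUnion hsub' hH').mono hle, ?_, hunion', ?_, ?_⟩
  · refine Set.disjoint_iUnion_left.2 fun c => Set.disjoint_iUnion_right.2 fun c' => ?_
    rcases eq_or_ne c c' with rfl | hcc'
    · exact hdisj c
    · exact (pairwise_disjoint_edgeSet hcc').mono (hsub c) (hsub' c')
  · rw [ncard_eq_sum_ncard_inter_edgeSet hE, evenPathCount, natCard_subtype_eq_sum_ite,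
      natCard_eq_sum_natCard_supp (G := G'), Finset.mul_sum, ← Finset.sum_add_distrib]
    exact Finset.sum_congr rfl fun c _ => iUnion_inter_edgeSet hsub c ▸ hcount c
  · rw [ncard_eq_sum_ncard_inter_edgeSet hE, ncard_eq_sum_ncard_inter_edgeSet hE', pathCount,
      natCard_subtype_eq_sum_ite, natCard_eq_sum_natCard_supp (G := G'),
      ← Finset.sum_add_distrib, ← Finset.sum_add_distrib]
    exact Finset.sum_congr rfl fun c _ =>
      iUnion_inter_edgeSet hsub c ▸ iUnion_inter_edgeSet hsub' c ▸ hcount' c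

lemma IsMatchingSet.ncard_add_ncard_add_pathCount_eq (hH : IsMatchingSet G H)
    (hH' : IsMatchingSet G H') (hd : Disjoint H H') :
    H.ncard + H'.ncard + pathCount (fromEdgeSet (H ∪ H')) = Nat.card V := by
  obtain ⟨K, K', -, -, hdK, hKE, -, hcount⟩ :=
    (isPec_fromEdgeSet_union hH hH').exists_isMatchingSet_split
  rw [edgeSet_fromEdgeSet_of_subset (Set.union_subset hH.1 hH'.1)] at hKE
  have : K.ncard + K'.ncard = H.ncard + H'.ncard := by
    rw [← Set.ncard_union_eq hdK, hKE, Set.ncard_union_eq hd]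
  omega

lemma lambdaParam_add_pMin (G : SimpleGraph V) : lambdaParam G + pMin G = Nat.card V := by
  apply le_antisymm
  · obtain ⟨H, H', hH, hH', hd, hlam⟩ := exists_lambdaParam G
    have := (isPec_fromEdgeSet_union hH hH').pMin_le
    have := hH.ncard_add_ncard_add_pathCount_eq hH' hd
    omega
  · obtain ⟨G', hG', hp⟩ := exists_pMin G
    obtain ⟨H, H', hH, hH', hd, -, -, hcount⟩ := hG'.exists_isMatchingSet_split
    have := ncard_add_ncard_le_lambdaParam hH hH' hd
    omega

lemma eMin_add_two_mul_matchingNumber (G : SimpleGraph V) :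
    eMin G + 2 * matchingNumber G = Nat.card V := by
  apply le_antisymm
  · obtain ⟨M, hM, hν⟩ := exists_matchingNumber G
    have hpec : IsPec G (fromEdgeSet M) := by
      simpa using isPec_fromEdgeSet_union hM (isMatchingSet_empty G)
    have := hpec.eMin_le
    have := (hM.isMatchingSet_fromEdgeSet subset_rfl hM.1).two_mul_ncard_add_evenPathCount_le
    omega
  · obtain ⟨G', hG', he⟩ := exists_eMin G
    obtain ⟨H, -, hH, -, -, -, hcount, -⟩ := hG'.exists_isMatchingSet_split
    have := hH.ncard_le_matchingNumber
    omega

lemma epMin_add_two_mul_muParam (G : SimpleGraph V) :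
    epMin G + 2 * muParam G = Nat.card V := by
  have hlam := lambdaParam_add_pMin G
  apply le_antisymm
  · obtain ⟨H, H', hH, hH', hd, hlam', hμ⟩ := exists_muParam G
    have hpec := isPec_fromEdgeSet_union hH hH'
    have := hH.ncard_add_ncard_add_pathCount_eq hH' hd
    have := hpec.epMin_le (by omega)
    have := (hH.isMatchingSet_fromEdgeSet Set.subset_union_left
      (Set.union_subset hH.1 hH'.1)).two_mul_ncard_add_evenPathCount_le
    omega
  · obtain ⟨G', hG', hp, he⟩ := exists_epMin G
    obtain ⟨H, H', hH, hH', hd, -, hcount, hcount'⟩ := hG'.exists_isMatchingSet_split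
    have := ncard_le_muParam hH hH' hd (by omega)
    omega

end Decomposition

/-- For every finite graph `G`, μ(G) = ν(G) if and only if e(G) = e_p(G). -/
theorem stmt_8 [Fintype V] (G : SimpleGraph V) :
    muParam G = matchingNumber G ↔ eMin G = epMin G := by
  have := eMin_add_two_mul_matchingNumber G
  have := epMin_add_two_mul_muParam G
  omega
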